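/- (Common edges of link graphs) For every α > 0 there exists n₀ ∈ ℕ such that for all n ≥ n₀ the following holds. If H = ([n], E) is a 3-graph with d(i,j) ≥ min(i, j, n/2) + αn for all pairs {i,j} of distinct vertices, then for any two distinct vertices u, v ∈ [n] with u ≥ n/2 and v ≥ n/2, the link graphs L_u and L_v have at least αn²/4 common edges, i.e. |E(L_u) ∩ E(L_v)| ≥ αn²/4. -/

import Mathlib

/-- `E` is the edge set of a 3-uniform hypergraph on vertex set `[n] = {1, …, n}`. -/
def IsThreeGraph (n : ℕ) (E : Finset (Finset ℕ)) : Prop :=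
  ∀ e ∈ E, e.card = 3 ∧ e ⊆ Finset.Icc 1 n

/-- The pair degree `d(i,j)`: the number of vertices `x` with `{i,j,x} ∈ E`. -/
def pairDeg (n : ℕ) (E : Finset (Finset ℕ)) (i j : ℕ) : ℕ :=
  ((Finset.Icc 1 n).filter fun x => ({i, j, x} : Finset ℕ) ∈ E).card

/-- The degree condition `d(i,j) ≥ min(i, j, n/2) + αn` for all distinct `i, j ∈ [n]`. -/
def DegCond (n : ℕ) (E : Finset (Finset ℕ)) (α : ℝ) : Prop :=
  ∀ i ∈ Finset.Icc 1 n, ∀ j ∈ Finset.Icc 1 n, i ≠ j →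
    min (min (i : ℝ) (j : ℝ)) ((n : ℝ) / 2) + α * n ≤ (pairDeg n E i j : ℝ)

/-!
For `x ≥ n/2` distinct from `u` and `v`, the degree condition gives `d(u,x), d(v,x) ≥ n/2 + αn`,
so `x` has at least `2αn` common neighbours `y` in `L_u` and `L_v`, i.e. `x` lies in at least
`2αn` common edges `{x,y}`. There are at least `n/4` such `x`, and each common edge contains at
most two of them, so double counting gives at least `(n/4) · 2αn / 2 = αn²/4` common edges.
-/

open Finset

theorem Finset.card_add_card_le_card_add_card_inter {α : Type*} [DecidableEq α]
    {s t u : Finset α} (hs : s ⊆ u) (ht : t ⊆ u) : #s + #t ≤ #u + #(s ∩ t) := by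
  rw [← card_union_add_card_inter]
  exact Nat.add_le_add_right (card_le_card (union_subset hs ht)) _

theorem Finset.ne_of_card_eq_three {α : Type*} [DecidableEq α] {a b c : α}
    (h : #({a, b, c} : Finset α) = 3) : b ≠ c := by
  rintro rfl
  have := card_le_two (a := a) (b := b)
  simp_all

theorem le_four_mul_card_upperHalf_sdiff {n : ℕ} (hn : 8 ≤ n) (u v : ℕ) :
    n ≤ 4 * #(Icc ((n + 1) / 2) n \ {u, v}) := by
  have hle := le_card_sdiff {u, v} (Icc ((n + 1) / 2) n)
  have := card_le_two (a := u) (b := v)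
  rw [Nat.card_Icc] at hle
  omega

theorem half_le_of_mem_Icc_half {n x : ℕ} (hx : x ∈ Icc ((n + 1) / 2) n) : (n : ℝ) / 2 ≤ x := by
  have : (n : ℝ) ≤ 2 * x := by exact_mod_cast (by rw [mem_Icc] at hx; omega : n ≤ 2 * x)
  linarith

/-- The neighbourhood of `x` in the link graph `L_u`. -/
def linkNbrs (n : ℕ) (E : Finset (Finset ℕ)) (u x : ℕ) : Finset ℕ :=
  (Icc 1 n).filter fun y => ({u, x, y} : Finset ℕ) ∈ E

def commonLinkEdges (n : ℕ) (E : Finset (Finset ℕ)) (u v : ℕ) : Finset (Finset ℕ) :=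
  ((Icc 1 n).powersetCard 2).filter fun p => insert u p ∈ E ∧ insert v p ∈ E

section

variable {n : ℕ} {E : Finset (Finset ℕ)} {u v x : ℕ}

theorem card_linkNbrs : #(linkNbrs n E u x) = pairDeg n E u x := rfl

theorem card_of_mem_commonLinkEdges {p : Finset ℕ} (hp : p ∈ commonLinkEdges n E u v) :
    #p = 2 :=
  (mem_powersetCard.1 (mem_filter.1 hp).1).2

theorem two_mul_le_card_linkNbrs_inter {α : ℝ} (hdeg : DegCond n E α)
    (hu : u ∈ Icc 1 n) (hv : v ∈ Icc 1 n) (hx : x ∈ Icc 1 n) (hux : u ≠ x) (hvx : v ≠ x)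
    (hun : (n : ℝ) / 2 ≤ u) (hvn : (n : ℝ) / 2 ≤ v) (hxn : (n : ℝ) / 2 ≤ x) :
    2 * α * n ≤ #(linkNbrs n E u x ∩ linkNbrs n E v x) := by
  have hdu := hdeg u hu x hx hux
  have hdv := hdeg v hv x hx hvx
  rw [min_eq_right (le_min hun hxn)] at hdu
  rw [min_eq_right (le_min hvn hxn)] at hdv
  have hincl : #(linkNbrs n E u x) + #(linkNbrs n E v x) ≤
      #(Icc 1 n) + #(linkNbrs n E u x ∩ linkNbrs n E v x) :=
    card_add_card_le_card_add_card_inter (filter_subset _ _) (filter_subset _ _)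
  rw [card_linkNbrs, card_linkNbrs, Nat.card_Icc, Nat.add_sub_cancel] at hincl
  have : (pairDeg n E u x : ℝ) + pairDeg n E v x ≤
      n + #(linkNbrs n E u x ∩ linkNbrs n E v x) := by exact_mod_cast hincl
  linarith

theorem ne_of_mem_linkNbrs (hE : IsThreeGraph n E) {y : ℕ} (hy : y ∈ linkNbrs n E u x) :
    x ≠ y :=
  ne_of_card_eq_three (hE _ (mem_filter.1 hy).2).1

theorem pair_mem_commonLinkEdges (hE : IsThreeGraph n E) (hx : x ∈ Icc 1 n) {y : ℕ}
    (hy : y ∈ linkNbrs n E u x ∩ linkNbrs n E v x) : {x, y} ∈ commonLinkEdges n E u v := by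
  obtain ⟨hyu, hyv⟩ := mem_inter.1 hy
  refine mem_filter.2 ⟨mem_powersetCard.2 ⟨?_, card_pair (ne_of_mem_linkNbrs hE hyu)⟩,
    (mem_filter.1 hyu).2, (mem_filter.1 hyv).2⟩
  exact insert_subset hx (singleton_subset_iff.2 (mem_filter.1 hyu).1)

theorem card_linkNbrs_inter_le (hE : IsThreeGraph n E) (hx : x ∈ Icc 1 n) :
    #(linkNbrs n E u x ∩ linkNbrs n E v x) ≤ #((commonLinkEdges n E u v).filter (x ∈ ·)) := by
  refine card_le_card_of_injOn (fun y => {x, y}) (fun y hy => ?_) (fun y hy z hz hyz => ?_)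
  · exact mem_filter.2 ⟨pair_mem_commonLinkEdges hE hx hy, mem_insert_self _ _⟩
  · have hy' : y ∈ ({x, z} : Finset ℕ) := by
      rw [← show ({x, y} : Finset ℕ) = {x, z} from hyz]
      exact mem_insert_of_mem (mem_singleton_self y)
    have hxy := ne_of_mem_linkNbrs hE (mem_inter.1 hy).1
    simp only [mem_insert, mem_singleton] at hy'
    exact hy'.resolve_left hxy.symm

end

/-- **Common edges of link graphs.** For every `α > 0` there is `n₀` such that for
`n ≥ n₀`, in any 3-graph `([n], E)` satisfying the degree condition, any two distinct
vertices `u, v ≥ n/2` have link graphs sharing at least `αn²/4` edges; a common edge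
of `L_u` and `L_v` is a 2-element set `p = {x,y} ⊆ [n]` with `{x,y,u} ∈ E` and
`{x,y,v} ∈ E`. -/
theorem stmt_14 (α : ℝ) (hα : 0 < α) :
    ∃ n₀ : ℕ, ∀ n : ℕ, n₀ ≤ n →
      ∀ E : Finset (Finset ℕ), IsThreeGraph n E → DegCond n E α →
      ∀ u v : ℕ, u ∈ Finset.Icc 1 n → v ∈ Finset.Icc 1 n → u ≠ v →
        (n : ℝ) / 2 ≤ (u : ℝ) → (n : ℝ) / 2 ≤ (v : ℝ) →
        α * (n : ℝ) ^ 2 / 4 ≤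
          ((((Finset.Icc 1 n).powersetCard 2).filter
            fun p => insert u p ∈ E ∧ insert v p ∈ E).card : ℝ) := by
  refine ⟨8, fun n hn E hE hdeg u v hu hv _ hun hvn => ?_⟩
  set S := Icc ((n + 1) / 2) n \ {u, v}
  have hS : (n : ℝ) ≤ 4 * #S := by exact_mod_cast le_four_mul_card_upperHalf_sdiff hn u v
  have hcount : #S • (2 * α * n) ≤ #(commonLinkEdges n E u v) • (2 : ℝ) := by
    refine card_nsmul_le_card_nsmul (fun x p => x ∈ p) (fun x hx => ?_) (fun p hp => ?_)
    · obtain ⟨hxHalf, hxuv⟩ := mem_sdiff.1 hx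
      have hxI : x ∈ Icc 1 n := Icc_subset_Icc_left (by omega) hxHalf
      have hux : u ≠ x := fun h => hxuv (h ▸ mem_insert_self u {v})
      have hvx : v ≠ x := fun h => hxuv (h ▸ mem_insert_of_mem (mem_singleton_self v))
      exact (two_mul_le_card_linkNbrs_inter hdeg hu hv hxI hux hvx hun hvn
          (half_le_of_mem_Icc_half hxHalf)).trans
        (by exact_mod_cast card_linkNbrs_inter_le hE hxI)
    · have : #(S.filter (· ∈ p)) ≤ 2 := (card_le_card fun x hx => (mem_filter.1 hx).2).trans
        (card_of_mem_commonLinkEdges hp).le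
      exact_mod_cast this
  rw [nsmul_eq_mul, nsmul_eq_mul] at hcount
  have : (n : ℝ) * (2 * α * n) ≤ 4 * #S * (2 * α * n) :=
    mul_le_mul_of_nonneg_right hS (by positivity)
  change _ ≤ (#(commonLinkEdges n E u v) : ℝ)
  nlinarith
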